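/- arXiv:2412.15516 — 3 statements merged into one kernel-verified Lean document; each statement's English description precedes it below -/
import Mathlib

section
/- Let (Ω, μ) be a probability space, ε > 0 a real number, n a natural number, I : Fin n → Ω → ℝ a family of integrable functions with 0 ≤ I i ω for all i and ω and ∫ I i dμ ≤ ε / Real.exp 1 for every i, and w : Fin n → ℝ with w i ≥ 0 for all i. Set W = ∑ i, w i and, for a real number w₀, define the estimate ŵ(ω) = w₀ + ∑ i, w i · I i ω. Then μ {ω | ŵ ω > w₀ + ε · W} ≤ (Real.exp 1)⁻¹; equivalently, ŵ ≤ w₀ + ε·W holds with probability at least 1 - e⁻¹. -/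
open MeasureTheory

/-- Theorem 2 of the HIGGS paper (error bound for vertex queries): if each nonnegative
collision indicator `I i` has expectation at most `ε/e` and the weights are
nonnegative with total `W`, then the estimate `wEst ω = w₀ + ∑ i, w i · I i ω`
exceeds `w₀ + ε·W` with probability at most `e⁻¹`. -/
theorem vertex_query_error_bound {Ω : Type*} [MeasurableSpace Ω]
    (μ : Measure Ω) [IsProbabilityMeasure μ] (ε : ℝ) (hε : 0 < ε) (n : ℕ)
    (I : Fin n → Ω → ℝ) (hint : ∀ i, Integrable (I i) μ)
    (hnonneg : ∀ i ω, 0 ≤ I i ω) (hexp : ∀ i, ∫ ω, I i ω ∂μ ≤ ε / Real.exp 1)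
    (w : Fin n → ℝ) (hw : ∀ i, 0 ≤ w i) (W : ℝ) (hW : W = ∑ i, w i)
    (w₀ : ℝ) (wEst : Ω → ℝ) (hwEst : ∀ ω, wEst ω = w₀ + ∑ i, w i * I i ω) :
    μ {ω | wEst ω > w₀ + ε * W} ≤ ENNReal.ofReal (Real.exp 1)⁻¹ := by
  set X : Ω → ℝ := fun ω => ∑ i, w i * I i ω with hX
  have hXint : Integrable X μ := integrable_finset_sum _ fun i _ => (hint i).const_mul _
  have hXnonneg : ∀ ω, 0 ≤ X ω := fun ω =>
    Finset.sum_nonneg fun i _ => mul_nonneg (hw i) (hnonneg i ω)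
  have hWnn : 0 ≤ W := hW ▸ Finset.sum_nonneg fun i _ => hw i
  rcases eq_or_lt_of_le hWnn with hW0 | hWpos
  · -- W = 0 forces all w i = 0, event empty
    have hall : ∀ i ∈ Finset.univ, w i = 0 := by
      intro i _
      have := (Finset.sum_eq_zero_iff_of_nonneg (fun i _ => hw i)).mp (hW ▸ hW0.symm)
      exact this i (Finset.mem_univ i)
    have : {ω | wEst ω > w₀ + ε * W} = ∅ := by
      ext ω
      simp only [Set.mem_setOf_eq, Set.mem_empty_iff_false, iff_false, not_lt, hwEst]
      rw [← hW0, mul_zero]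
      have : X ω = 0 := Finset.sum_eq_zero fun i hi => by rw [hall i hi, zero_mul]
      simp [hX] at this
      simp [this]
    rw [this]
    simp
  · -- Markov
    have hEX : ∫ ω, X ω ∂μ ≤ ε * W / Real.exp 1 := by
      rw [hX]
      rw [integral_finset_sum _ fun i _ => (hint i).const_mul _]
      calc ∑ i, ∫ ω, w i * I i ω ∂μ = ∑ i, w i * ∫ ω, I i ω ∂μ := by
            simp [integral_const_mul]
        _ ≤ ∑ i, w i * (ε / Real.exp 1) :=
            Finset.sum_le_sum fun i _ => mul_le_mul_of_nonneg_left (hexp i) (hw i)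
        _ = ε * W / Real.exp 1 := by
            rw [← Finset.sum_mul, ← hW]; ring
    have hmarkov := mul_meas_ge_le_integral_of_nonneg
      (ae_of_all μ hXnonneg) hXint (ε * W)
    have hεW : 0 < ε * W := mul_pos hε hWpos
    have hsub : {ω | wEst ω > w₀ + ε * W} ⊆ {ω | ε * W ≤ X ω} := by
      intro ω hω
      simp only [Set.mem_setOf_eq, hwEst] at hω ⊢
      linarith
    have hfin : μ {ω | ε * W ≤ X ω} ≠ ⊤ := measure_ne_top _ _
    have hbound : (μ {ω | ε * W ≤ X ω}).toReal ≤ (Real.exp 1)⁻¹ := by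
      have h1 : ε * W * (μ {ω | ε * W ≤ X ω}).toReal ≤ ε * W / Real.exp 1 :=
        le_trans hmarkov hEX
      rw [div_eq_mul_inv] at h1
      exact le_of_mul_le_mul_left h1 hεW
    calc μ {ω | wEst ω > w₀ + ε * W} ≤ μ {ω | ε * W ≤ X ω} := measure_mono hsub
      _ = ENNReal.ofReal (μ {ω | ε * W ≤ X ω}).toReal := (ENNReal.ofReal_toReal hfin).symm
      _ ≤ ENNReal.ofReal (Real.exp 1)⁻¹ := ENNReal.ofReal_le_ofReal hbound
end

section
/- Let (Ω, μ) be a probability space, ε > 0 a real number, n a natural number, I : Fin n → Ω → ℝ a family of integrable functions with 0 ≤ I i ω for all i and ω and ∫ I i dμ ≤ ε² / (Real.exp 1)² for every i, and w : Fin n → ℝ with w i ≥ 0 for all i. Set W = ∑ i, w i and, for a real number w₀, define the estimate ŵ(ω) = w₀ + ∑ i, w i · I i ω. Then μ {ω | ŵ ω > w₀ + ε² · W / Real.exp 1} ≤ (Real.exp 1)⁻¹; equivalently, ŵ ≤ w₀ + ε²·W/e holds with probability at least 1 - e⁻¹. -/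
/-!
The estimate exceeds the true weight by the nonnegative collision sum
`S = ∑ i, w i * I i`, whose expectation is at most `ε² W / e² = e⁻¹ · (ε² W / e)` by
linearity. Markov's inequality at the threshold `ε² W / e` then bounds the probability of
exceeding it by `e⁻¹`.
-/

open MeasureTheory

namespace MeasureTheory

variable {Ω ι : Type*} [MeasurableSpace Ω] {μ : Measure Ω}

theorem integral_sum_mul_le_of_integral_le (s : Finset ι) {I : ι → Ω → ℝ}
    (hint : ∀ i ∈ s, Integrable (I i) μ) {p : ℝ}
    (hp : ∀ i ∈ s, ∫ ω, I i ω ∂μ ≤ p)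
    {w : ι → ℝ} (hw : ∀ i ∈ s, 0 ≤ w i) :
    ∫ ω, ∑ i ∈ s, w i * I i ω ∂μ ≤ p * ∑ i ∈ s, w i := by
  rw [integral_finsetSum _ fun i hi => (hint i hi).const_mul _, Finset.mul_sum]
  refine Finset.sum_le_sum fun i hi => ?_
  rw [integral_const_mul, mul_comm p]
  exact mul_le_mul_of_nonneg_left (hp i hi) (hw i hi)

/-- Markov's inequality for the strict tail, in a form that also covers the threshold `t = 0`. -/
theorem measure_lt_le_ofReal_of_integral_le_mul {S : Ω → ℝ} (hS : 0 ≤ᵐ[μ] S)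
    (hint : Integrable S μ) {t δ : ℝ} (ht : 0 ≤ t) (hδ : 0 ≤ δ)
    (hle : ∫ ω, S ω ∂μ ≤ δ * t) :
    μ {ω | t < S ω} ≤ ENNReal.ofReal δ := by
  rcases ht.eq_or_lt with rfl | ht
  · have hS0 : S =ᵐ[μ] 0 :=
      (integral_eq_zero_iff_of_nonneg_ae hS hint).mp
        (le_antisymm (by simpa using hle) (integral_nonneg_of_ae hS))
    refine le_of_eq_of_le (measure_eq_zero_iff_ae_notMem.mpr ?_) bot_le
    filter_upwards [hS0] with ω hω
    simp [hω]
  · have hmarkov :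
        ENNReal.ofReal t * μ {ω | t < S ω} ≤ ENNReal.ofReal t * ENNReal.ofReal δ :=
      calc ENNReal.ofReal t * μ {ω | t < S ω}
          ≤ ENNReal.ofReal t * μ {ω | ENNReal.ofReal t ≤ ENNReal.ofReal (S ω)} := by
            gcongr
            exact fun hω => ENNReal.ofReal_le_ofReal hω.le
        _ ≤ ∫⁻ ω, ENNReal.ofReal (S ω) ∂μ :=
            mul_meas_ge_le_lintegral₀ hint.aemeasurable.ennreal_ofReal _
        _ = ENNReal.ofReal (∫ ω, S ω ∂μ) :=
            (ofReal_integral_eq_lintegral_ofReal hint hS).symm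
        _ ≤ ENNReal.ofReal (δ * t) := ENNReal.ofReal_le_ofReal hle
        _ = ENNReal.ofReal t * ENNReal.ofReal δ := by rw [ENNReal.ofReal_mul hδ, mul_comm]
    exact (ENNReal.mul_le_mul_iff_right (by simpa using ht) ENNReal.ofReal_ne_top).mp hmarkov

end MeasureTheory

theorem edge_query_error_bound_general {Ω : Type*} [MeasurableSpace Ω]
    (μ : Measure Ω) (ε : ℝ) (n : ℕ)
    (I : Fin n → Ω → ℝ) (hint : ∀ i, Integrable (I i) μ)
    (hnonneg : ∀ i ω, 0 ≤ I i ω)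
    (hexp : ∀ i, ∫ ω, I i ω ∂μ ≤ ε ^ 2 / (Real.exp 1) ^ 2)
    (w : Fin n → ℝ) (hw : ∀ i, 0 ≤ w i) (W : ℝ) (hW : W = ∑ i, w i)
    (w₀ : ℝ) (wEst : Ω → ℝ) (hwEst : ∀ ω, wEst ω = w₀ + ∑ i, w i * I i ω) :
    μ {ω | wEst ω > w₀ + ε ^ 2 * W / Real.exp 1} ≤ ENNReal.ofReal (Real.exp 1)⁻¹ := by
  have hW_nonneg : 0 ≤ W := hW ▸ Finset.sum_nonneg fun i _ => hw i
  have hexcess : {ω | wEst ω > w₀ + ε ^ 2 * W / Real.exp 1}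
      = {ω | ε ^ 2 * W / Real.exp 1 < ∑ i, w i * I i ω} := by
    ext ω
    simp [hwEst]
  rw [hexcess]
  refine measure_lt_le_ofReal_of_integral_le_mul (Filter.Eventually.of_forall fun ω =>
      Finset.sum_nonneg fun i _ => mul_nonneg (hw i) (hnonneg i ω))
    (integrable_finsetSum _ fun i _ => (hint i).const_mul _) (by positivity) (by positivity) ?_
  calc ∫ ω, ∑ i, w i * I i ω ∂μ ≤ ε ^ 2 / Real.exp 1 ^ 2 * W := by
        rw [hW]
        exact integral_sum_mul_le_of_integral_le _ (fun i _ => hint i) (fun i _ => hexp i)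
          fun i _ => hw i
    _ = (Real.exp 1)⁻¹ * (ε ^ 2 * W / Real.exp 1) := by ring

/-- Theorem 3 of the HIGGS paper (error bound for edge queries): if each nonnegative
collision indicator `I i` has expectation at most `ε²/e²` and the weights are
nonnegative with total `W`, then the estimate `wEst ω = w₀ + ∑ i, w i · I i ω`
exceeds `w₀ + ε²·W/e` with probability at most `e⁻¹`. -/
theorem edge_query_error_bound {Ω : Type*} [MeasurableSpace Ω]
    (μ : Measure Ω) [IsProbabilityMeasure μ] (ε : ℝ) (hε : 0 < ε) (n : ℕ)
    (I : Fin n → Ω → ℝ) (hint : ∀ i, Integrable (I i) μ)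
    (hnonneg : ∀ i ω, 0 ≤ I i ω)
    (hexp : ∀ i, ∫ ω, I i ω ∂μ ≤ ε ^ 2 / (Real.exp 1) ^ 2)
    (w : Fin n → ℝ) (hw : ∀ i, 0 ≤ w i) (W : ℝ) (hW : W = ∑ i, w i)
    (w₀ : ℝ) (wEst : Ω → ℝ) (hwEst : ∀ ω, wEst ω = w₀ + ∑ i, w i * I i ω) :
    μ {ω | wEst ω > w₀ + ε ^ 2 * W / Real.exp 1} ≤ ENNReal.ofReal (Real.exp 1)⁻¹ :=
  edge_query_error_bound_general μ ε n I hint hnonneg hexp w hw W hW w₀ wEst hwEst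
end

section
/- Let θ ≥ 2 be a natural number and let a < b be natural numbers. Then there exists a finite set S of pairs (i, j) of natural numbers such that the half-open intervals Ico (j·θ^i) ((j+1)·θ^i) indexed by (i, j) ∈ S are pairwise disjoint, their union equals Ico a b, and the cardinality of S is at most 2·(θ - 1)·(Nat.log θ (b - a) + 1). -/
namespace ThetaAdic

/-- The canonical interval of a pair. -/
def F (θ : ℕ) (p : ℕ × ℕ) : Set ℕ := Set.Ico (p.2 * θ ^ p.1) ((p.2 + 1) * θ ^ p.1)

/-- `S` is a θ-adic decomposition of `[a, b)`. -/
def IsDecomp (θ a b : ℕ) (S : Finset (ℕ × ℕ)) : Prop :=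
  (S : Set (ℕ × ℕ)).PairwiseDisjoint (F θ) ∧ (⋃ p ∈ S, F θ p) = Set.Ico a b

lemma ltdiv (x θ : ℕ) (hθ : 0 < θ) : x < (x / θ + 1) * θ :=
  (Nat.div_lt_iff_lt_mul hθ).1 (Nat.lt_succ_self _)

lemma F_subset {θ a b : ℕ} {S : Finset (ℕ × ℕ)} (h : IsDecomp θ a b S) {p : ℕ × ℕ}
    (hp : p ∈ S) : F θ p ⊆ Set.Ico a b := by
  rw [← h.2]
  exact Set.subset_biUnion_of_mem hp

/-- Singleton decomposition. -/
lemma singl (θ a b : ℕ) (hab : a ≤ b) :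
    ∃ S : Finset (ℕ × ℕ), IsDecomp θ a b S ∧ S.card = b - a := by
  refine ⟨(Finset.Ico a b).image (fun k => (0, k)), ⟨?_, ?_⟩, ?_⟩
  · intro p hp q hq hne
    simp only [Finset.coe_image, Set.mem_image, Finset.mem_coe, Finset.mem_Ico] at hp hq
    obtain ⟨k, hk, rfl⟩ := hp
    obtain ⟨l, hl, rfl⟩ := hq
    have hkl : k ≠ l := by simpa using hne
    simp only [Function.onFun, F, pow_zero, mul_one, Set.Ico_disjoint_Ico]
    omega
  · ext x
    simp only [Set.mem_iUnion, exists_prop]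
    constructor
    · rintro ⟨p, hp, hx⟩
      simp only [Finset.mem_image, Finset.mem_Ico] at hp
      obtain ⟨k, hk, rfl⟩ := hp
      simp only [F, pow_zero, mul_one, Set.mem_Ico] at hx
      simp only [Set.mem_Ico]
      omega
    · intro hx
      simp only [Set.mem_Ico] at hx
      exact ⟨(0, x), by simp [Finset.mem_Ico]; omega, by simp [F, Set.mem_Ico]⟩
  · rw [Finset.card_image_of_injective _ (fun x y h => by simpa using h), Nat.card_Ico]

/-- Glue two decompositions. -/
lemma glue {θ a m b : ℕ} {S₁ S₂ : Finset (ℕ × ℕ)} (ham : a ≤ m) (hmb : m ≤ b)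
    (h₁ : IsDecomp θ a m S₁) (h₂ : IsDecomp θ m b S₂) : IsDecomp θ a b (S₁ ∪ S₂) := by
  constructor
  · simp only [Finset.coe_union]
    refine Set.pairwiseDisjoint_union.2 ⟨h₁.1, h₂.1, ?_⟩
    intro p hp q hq _
    exact Set.disjoint_of_subset (F_subset h₁ hp) (F_subset h₂ hq)
      Set.Ico_disjoint_Ico_same
  · rw [Finset.set_biUnion_union, h₁.2, h₂.2, Set.Ico_union_Ico_eq_Ico ham hmb]

/-- Scaling a decomposition by θ. -/
lemma scale {θ c d : ℕ} (hθ : 0 < θ) {S : Finset (ℕ × ℕ)} (h : IsDecomp θ c d S) :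
    ∃ T : Finset (ℕ × ℕ), IsDecomp θ (θ * c) (θ * d) T ∧ T.card = S.card := by
  have hinj : Function.Injective (fun p : ℕ × ℕ => (p.1 + 1, p.2)) := by
    intro p q hpq
    simp only [Prod.mk.injEq] at hpq
    exact Prod.ext (by omega) hpq.2
  refine ⟨S.image (fun p => (p.1 + 1, p.2)), ⟨?_, ?_⟩, Finset.card_image_of_injective _ hinj⟩
  · intro p hp q hq hne
    simp only [Finset.coe_image, Set.mem_image, Finset.mem_coe] at hp hq
    obtain ⟨p', hp', rfl⟩ := hp
    obtain ⟨q', hq', rfl⟩ := hq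
    have hne' : p' ≠ q' := fun e => hne (by rw [e])
    have hd := h.1 hp' hq' hne'
    simp only [Function.onFun, F, Set.Ico_disjoint_Ico] at hd ⊢
    have e1 : ∀ j i : ℕ, j * θ ^ (i + 1) = θ * (j * θ ^ i) := by
      intro j i; rw [pow_succ]; ring
    rw [e1, e1, e1, e1]
    rcases min_le_iff.1 hd with h' | h' <;> rcases le_max_iff.1 h' with h'' | h''
    · exact le_trans (min_le_left _ _) (le_max_of_le_left (Nat.mul_le_mul_left θ h''))
    · exact le_trans (min_le_left _ _) (le_max_of_le_right (Nat.mul_le_mul_left θ h''))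
    · exact le_trans (min_le_right _ _) (le_max_of_le_left (Nat.mul_le_mul_left θ h''))
    · exact le_trans (min_le_right _ _) (le_max_of_le_right (Nat.mul_le_mul_left θ h''))
  · ext x
    simp only [Set.mem_iUnion, Finset.mem_image, exists_prop]
    constructor
    · rintro ⟨p, ⟨p', hp', rfl⟩, hx⟩
      simp only [F, Set.mem_Ico] at hx
      have hsub := F_subset h hp'
      have hpow : 0 < θ ^ p'.1 := pow_pos hθ _
      have hne2 : p'.2 * θ ^ p'.1 < (p'.2 + 1) * θ ^ p'.1 := by nlinarith
      have h1 : p'.2 * θ ^ p'.1 ∈ Set.Ico c d := hsub (by simp [F, Set.mem_Ico]; omega)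
      have h2 : (p'.2 + 1) * θ ^ p'.1 - 1 ∈ Set.Ico c d := hsub (by simp [F, Set.mem_Ico]; omega)
      simp only [Set.mem_Ico] at h1 h2 ⊢
      have e1 : p'.2 * θ ^ (p'.1 + 1) = θ * (p'.2 * θ ^ p'.1) := by rw [pow_succ]; ring
      have e2 : (p'.2 + 1) * θ ^ (p'.1 + 1) = θ * ((p'.2 + 1) * θ ^ p'.1) := by
        rw [pow_succ]; ring
      rw [e1, e2] at hx
      constructor
      · calc θ * c ≤ θ * (p'.2 * θ ^ p'.1) := Nat.mul_le_mul_left θ h1.1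
          _ ≤ x := hx.1
      · calc x < θ * ((p'.2 + 1) * θ ^ p'.1) := hx.2
          _ ≤ θ * d := Nat.mul_le_mul_left θ (by omega)
    · intro hx
      simp only [Set.mem_Ico] at hx
      have hq : x / θ ∈ Set.Ico c d := by
        simp only [Set.mem_Ico]
        refine ⟨(Nat.le_div_iff_mul_le hθ).2 (by rw [mul_comm]; exact hx.1), ?_⟩
        exact Nat.div_lt_of_lt_mul hx.2
      rw [← h.2] at hq
      simp only [Set.mem_iUnion, exists_prop, F, Set.mem_Ico] at hq
      obtain ⟨p, hp, hu, hv⟩ := hq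
      refine ⟨(p.1 + 1, p.2), ⟨p, hp, rfl⟩, ?_⟩
      simp only [F, Set.mem_Ico]
      have e1 : p.2 * θ ^ (p.1 + 1) = θ * (p.2 * θ ^ p.1) := by rw [pow_succ]; ring
      have e2 : (p.2 + 1) * θ ^ (p.1 + 1) = θ * ((p.2 + 1) * θ ^ p.1) := by rw [pow_succ]; ring
      rw [e1, e2]
      constructor
      · calc θ * (p.2 * θ ^ p.1) ≤ θ * (x / θ) := Nat.mul_le_mul_left θ hu
          _ ≤ x := Nat.mul_div_le x θ
      · have hlt : x < θ * (x / θ + 1) := by rw [mul_comm]; exact ltdiv x θ hθ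
        calc x < θ * (x / θ + 1) := hlt
          _ ≤ θ * ((p.2 + 1) * θ ^ p.1) := Nat.mul_le_mul_left θ (by
              have hpow : 0 < θ ^ p.1 := pow_pos hθ _
              nlinarith)

lemma main_aux (θ : ℕ) (hθ : 2 ≤ θ) :
    ∀ L a b : ℕ, a ≤ b → b - a < θ ^ (L + 1) →
      ∃ S : Finset (ℕ × ℕ), IsDecomp θ a b S ∧ S.card ≤ 2 * (θ - 1) * (L + 1) := by
  intro L
  induction L with
  | zero =>
    intro a b hab hlt
    obtain ⟨S, hS, hcard⟩ := singl θ a b hab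
    rw [zero_add, pow_one] at hlt
    exact ⟨S, hS, by omega⟩
  | succ L ih =>
    intro a b hab hlt
    have hθ0 : 0 < θ := by omega
    by_cases hsmall : b - a < θ
    · obtain ⟨S, hS, hcard⟩ := singl θ a b hab
      refine ⟨S, hS, ?_⟩
      have h1 : S.card ≤ 2 * (θ - 1) := by omega
      exact h1.trans (Nat.le_mul_of_pos_right _ (by omega))
    · push_neg at hsmall
      set c := (a + θ - 1) / θ with hc
      set d := b / θ with hd
      have hca := ltdiv (a + θ - 1) θ hθ0
      have hca2 : θ * c ≤ a + θ - 1 := by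
        rw [mul_comm]; exact Nat.div_mul_le_self _ _
      have hring1 : (c + 1) * θ = θ * c + θ := by ring
      rw [hring1] at hca
      have hac : a ≤ θ * c := by omega
      have hbd : θ * d ≤ b := by rw [mul_comm]; exact Nat.div_mul_le_self _ _
      have hdb := ltdiv b θ hθ0
      have hring2 : (d + 1) * θ = θ * d + θ := by ring
      rw [hring2] at hdb
      have hcb : θ * c ≤ b := by omega
      have hcd : c ≤ d := by
        have : c ≤ b / θ := (Nat.le_div_iff_mul_le hθ0).2 (by rw [mul_comm]; exact hcb)
        exact this
      have hmulcd : θ * c ≤ θ * d := Nat.mul_le_mul_left θ hcd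
      have hsubeq : θ * (d - c) + θ * c = θ * d := by
        rw [← Nat.mul_add, Nat.sub_add_cancel hcd]
      have hdcsmall : d - c < θ ^ (L + 1) := by
        have h1 : θ * (d - c) ≤ b - a := by omega
        have h2 : θ ^ (L + 1 + 1) = θ * θ ^ (L + 1) := by rw [pow_succ]; ring
        have h3 : θ * (d - c) < θ * θ ^ (L + 1) := by omega
        exact Nat.lt_of_mul_lt_mul_left h3
      obtain ⟨Sm', hSm', hcm'⟩ := ih c d hcd hdcsmall
      obtain ⟨Sm, hSm, hcm⟩ := scale hθ0 hSm'
      obtain ⟨SL, hSL, hcL⟩ := singl θ a (θ * c) hac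
      obtain ⟨SR, hSR, hcR⟩ := singl θ (θ * d) b hbd
      have g1 := glue hac hmulcd hSL hSm
      have g2 := glue (hac.trans hmulcd) hbd g1 hSR
      refine ⟨_, g2, ?_⟩
      have hL : SL.card ≤ θ - 1 := by omega
      have hR : SR.card ≤ θ - 1 := by omega
      have hM : Sm.card ≤ 2 * (θ - 1) * (L + 1) := by omega
      calc (SL ∪ Sm ∪ SR).card ≤ (SL ∪ Sm).card + SR.card := Finset.card_union_le _ _
        _ ≤ SL.card + Sm.card + SR.card := by
            have := Finset.card_union_le SL Sm; omega
        _ ≤ (θ - 1) + 2 * (θ - 1) * (L + 1) + (θ - 1) := by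
            exact Nat.add_le_add (Nat.add_le_add hL hM) hR
        _ = 2 * (θ - 1) * (L + 1 + 1) := by ring

end ThetaAdic

/-- θ-adic decomposition of an integer interval: any interval `[a, b)` can be
partitioned into pairwise disjoint canonical intervals `[j·θ^i, (j+1)·θ^i)`,
using at most `2(θ-1)(⌊log_θ (b-a)⌋ + 1)` of them. -/
theorem theta_adic_interval_decomposition (θ : ℕ) (hθ : 2 ≤ θ) (a b : ℕ) (hab : a < b) :
    ∃ S : Finset (ℕ × ℕ),
      (S : Set (ℕ × ℕ)).PairwiseDisjoint
        (fun p => Set.Ico (p.2 * θ ^ p.1) ((p.2 + 1) * θ ^ p.1)) ∧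
      (⋃ p ∈ S, Set.Ico (p.2 * θ ^ p.1) ((p.2 + 1) * θ ^ p.1)) = Set.Ico a b ∧
      S.card ≤ 2 * (θ - 1) * (Nat.log θ (b - a) + 1) := by
  obtain ⟨S, ⟨hdisj, hunion⟩, hcard⟩ :=
    ThetaAdic.main_aux θ hθ (Nat.log θ (b - a)) a b hab.le
      (Nat.lt_pow_succ_log_self (by omega) (b - a))
  exact ⟨S, hdisj, hunion, hcard⟩
end
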